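/- Let {X_ℓ, f_ℓ} be an inverse sequence of compact metric spaces with surjective continuous bonding functions. The following are equivalent: (1) the inverse limit varprojlim{X_ℓ, f_ℓ} does not have the fixed point property; (2) there is a sequence (H_ℓ) of upper semicontinuous set-valued functions H_ℓ : X_{ℓ+1} ⊸ X_ℓ such that (a) f_k(H_{k+1}(x)) ⊆ H_k(f_{k+1}(x)) for each positive integer k and each x ∈ X_{k+2}, (b) for each positive integer j, lim_{k→∞, k≥j} diam(f_{j,k}(H_k(p_{k+1}(x)))) = 0 for every x ∈ varprojlim{X_ℓ, f_ℓ} (where p_{k+1}(x) denotes the (k+1)-st coordinate of x), and (c) there is a positive integer k such that f_k(x) ∉ H_k(x) for each point x ∈ X_{k+1}. -/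

import Mathlib

/-!
A fixed-point-free continuous map `g` of the inverse limit yields
`H k x = Ttrans g k (k + 1) x = {(g z) k | z (k + 1) = x}`, whose graph is a continuous image of
the compact inverse limit. The diameters shrink because the threads agreeing with `z` at level
`k + 1` shrink to `z`, and by compactness `g` moves the `k`-th coordinate of every thread for
some `k`, which is the condition `f k x ∉ H k x`.

Conversely, for each thread `z` and level `j` the compact sets `f_{j,k} (H k (z (k + 1)))` decrease
in `k` (by the compatibility condition) with diameters tending to `0`, so they meet in a single
point `(g z) j`. These points form a thread, `g` has closed graph into a compact space and is
therefore continuous, and a fixed point `p` would satisfy `p k = f k (p (k + 1)) ∈ H k (p (k + 1))`.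
-/

open Metric Filter Set Function

/-- The inverse limit of an inverse sequence `{X n, f n}` of spaces with
single-valued bonding maps `f n : X (n+1) → X n`. -/
def invLim (X : ℕ → Type*) (f : ∀ n, X (n + 1) → X n) : Set (∀ n, X n) :=
  {x | ∀ n, x n = f n (x (n + 1))}

/-- The composite bonding map `f_{n,m} : X m → X n` for `n ≤ m`. -/
def bondMap {X : ℕ → Type*} (f : ∀ n, X (n + 1) → X n) {n m : ℕ} (h : n ≤ m) :
    X m → X n :=
  Nat.leRecOn (C := fun k => X k → X n) h (fun {k} g => g ∘ f k) id

/-- A set-valued function is upper semicontinuous (with nonempty closed values):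
all of its values are nonempty closed sets and its graph is closed. -/
def IsUSC {A B : Type*} [TopologicalSpace A] [TopologicalSpace B] (F : A → Set B) : Prop :=
  (∀ a, (F a).Nonempty) ∧ (∀ a, IsClosed (F a)) ∧ IsClosed {p : A × B | p.2 ∈ F p.1}

/-- The `T_{n,m}` transformation of a map between inverse limits:
`T_{n,m}(g)(x) = q_n (g (p_m ⁻¹ x))`. -/
def Ttrans {X Y : ℕ → Type*} {f : ∀ n, X (n + 1) → X n} {gs : ∀ n, Y (n + 1) → Y n}
    (g : ↥(invLim X f) → ↥(invLim Y gs)) (n m : ℕ) (x : X m) : Set (Y n) :=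
  {y | ∃ z : ↥(invLim X f), z.1 m = x ∧ (g z).1 n = y}

/-- A space has the fixed point property if every continuous self-map has a fixed point. -/
def HasFPP (Z : Type*) [TopologicalSpace Z] : Prop :=
  ∀ g : Z → Z, Continuous g → ∃ p, g p = p

open Topology

theorem continuous_of_isClosed_graph {A B : Type*} [TopologicalSpace A] [TopologicalSpace B]
    [CompactSpace B] {g : A → B} (h : IsClosed {p : A × B | p.2 = g p.1}) : Continuous g := by
  refine continuous_iff_isClosed.mpr fun C hC => ?_
  have : g ⁻¹' C = Prod.fst '' ({p : A × B | p.2 = g p.1} ∩ univ ×ˢ C) := by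
    ext a
    constructor
    · exact fun ha => ⟨(a, g a), ⟨rfl, trivial, ha⟩, rfl⟩
    · rintro ⟨⟨a, b⟩, ⟨hb, -, hbC⟩, rfl⟩
      obtain rfl : b = g a := hb
      exact hbC
  rw [this]
  exact isClosedMap_fst_of_compactSpace _ (h.inter (isClosed_univ.prod hC))

theorem isClosed_setOf_mem_image {A B C : Type*} [TopologicalSpace A] [TopologicalSpace B]
    [TopologicalSpace C] [CompactSpace A] [CompactSpace B] [T2Space A] [T2Space C]
    {F : A → Set B} (hF : IsClosed {p : A × B | p.2 ∈ F p.1}) {φ : B → C} (hφ : Continuous φ) :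
    IsClosed {p : A × C | p.2 ∈ φ '' F p.1} := by
  have : {p : A × C | p.2 ∈ φ '' F p.1} = Prod.map id φ '' {p : A × B | p.2 ∈ F p.1} := by
    ext ⟨a, c⟩
    simp only [mem_ofPred_eq, mem_image, Prod.exists, Prod.map, id, Prod.mk.injEq]
    constructor
    · rintro ⟨b, hb, rfl⟩
      exact ⟨a, b, hb, rfl, rfl⟩
    · rintro ⟨a, b, hb, rfl, rfl⟩
      exact ⟨b, hb, rfl⟩
  rw [this]
  exact (hF.isCompact.image (continuous_id.prodMap hφ)).isClosed

theorem tendsto_diam_image_of_antitone {A B : Type*} [TopologicalSpace A] [CompactSpace A]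
    [MetricSpace B] {S : ℕ → Set A} (hS : Antitone S) (hS_closed : ∀ k, IsClosed (S k)) {z : A}
    (hSz : ⋂ k, S k ⊆ {z}) {φ : A → B} (hφ : Continuous φ) :
    Tendsto (fun k => diam (φ '' S k)) atTop (𝓝 0) := by
  refine Metric.tendsto_atTop.mpr fun ε hε => ?_
  have hU : ∀ x ∈ ⋂ k, S k, φ ⁻¹' ball (φ z) (ε / 3) ∈ 𝓝 x := fun x hx => by
    rw [hSz hx]
    exact (isOpen_ball.preimage hφ).mem_nhds (mem_ball_self (by positivity))
  obtain ⟨K, hK⟩ := exists_subset_nhds_of_isCompact' hS.directed_ge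
    (fun k => (hS_closed k).isCompact) hS_closed hU
  refine ⟨K, fun k hk => ?_⟩
  have : diam (φ '' S k) ≤ 2 * (ε / 3) :=
    (diam_mono (image_subset_iff.mpr ((hS hk).trans hK)) isBounded_ball).trans
      (diam_ball (by positivity))
  rw [Real.dist_eq, sub_zero, abs_of_nonneg diam_nonneg]
  linarith

theorem exists_iInter_eq_singleton_of_tendsto_diam {A : Type*} [MetricSpace A] {S : ℕ → Set A}
    (hS : Antitone S) (hS_nonempty : ∀ k, (S k).Nonempty) (hS_compact : ∀ k, IsCompact (S k))
    (hS_diam : Tendsto (fun k => diam (S k)) atTop (𝓝 0)) : ∃ a, ⋂ k, S k = {a} := by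
  refine exists_eq_singleton_iff_nonempty_subsingleton.mpr ⟨?_, fun a ha b hb => ?_⟩
  · exact IsCompact.nonempty_iInter_of_sequence_nonempty_isCompact_isClosed S
      (fun k => hS k.le_succ) hS_nonempty (hS_compact 0) fun k => (hS_compact k).isClosed
  · rw [mem_iInter] at ha hb
    refine dist_le_zero.mp (ge_of_tendsto' hS_diam fun k => ?_)
    exact dist_le_diam_of_mem (hS_compact k).isBounded (ha k) (hb k)

section BondMap

variable {X : ℕ → Type*} (f : ∀ n, X (n + 1) → X n)

theorem bondMap_self {n : ℕ} (h : n ≤ n) : bondMap f h = id :=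
  Nat.leRecOn_self (C := fun k => X k → X n) _

theorem bondMap_succ {n m : ℕ} (h : n ≤ m) (h' : n ≤ m + 1) :
    bondMap f h' = bondMap f h ∘ f m :=
  Nat.leRecOn_succ (C := fun k => X k → X n) h _

theorem bondMap_of_succ_le {n m : ℕ} (h : n ≤ m) (h' : n + 1 ≤ m) :
    bondMap f h = f n ∘ bondMap f h' := by
  induction m, h' using Nat.le_induction with
  | base => rw [bondMap_succ f le_rfl h, bondMap_self, bondMap_self]; rfl
  | succ m hm ih => rw [bondMap_succ f (by omega) h, bondMap_succ f hm, ih (by omega)]; rfl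

theorem bondMap_surjective (hfs : ∀ n, Surjective (f n)) {n m : ℕ} (h : n ≤ m) :
    Surjective (bondMap f h) := by
  induction m, h using Nat.le_induction with
  | base => rw [bondMap_self]; exact surjective_id
  | succ m hm ih => rw [bondMap_succ f hm]; exact ih.comp (hfs m)

theorem continuous_bondMap [∀ n, TopologicalSpace (X n)] {f : ∀ n, X (n + 1) → X n}
    (hfc : ∀ n, Continuous (f n)) {n m : ℕ} (h : n ≤ m) : Continuous (bondMap f h) := by
  induction m, h using Nat.le_induction with
  | base => rw [bondMap_self]; exact continuous_id
  | succ m hm ih => rw [bondMap_succ f hm]; exact ih.comp (hfc m)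

variable {f}

theorem bondMap_apply_of_mem_invLim {z : ∀ n, X n} (hz : z ∈ invLim X f) {n m : ℕ}
    (h : n ≤ m) : bondMap f h (z m) = z n := by
  induction m, h using Nat.le_induction with
  | base => rw [bondMap_self]; rfl
  | succ m hm ih => rw [bondMap_succ f hm, comp_apply, ← hz m, ih]

theorem apply_eq_of_mem_invLim {z w : ∀ n, X n} (hz : z ∈ invLim X f) (hw : w ∈ invLim X f)
    {n m : ℕ} (h : n ≤ m) (hzw : z m = w m) : z n = w n := by
  rw [← bondMap_apply_of_mem_invLim hz h, hzw, bondMap_apply_of_mem_invLim hw h]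

end BondMap

section InvLim

variable {X : ℕ → Type*} [∀ n, TopologicalSpace (X n)] [∀ n, T2Space (X n)]
  {f : ∀ n, X (n + 1) → X n}

theorem isClosed_invLim (hfc : ∀ n, Continuous (f n)) : IsClosed (invLim X f) := by
  rw [invLim, ofPred_forall]
  exact isClosed_iInter fun n =>
    isClosed_eq (continuous_apply n) ((hfc n).comp (continuous_apply _))

theorem compactSpace_invLim [∀ n, CompactSpace (X n)] (hfc : ∀ n, Continuous (f n)) :
    CompactSpace (invLim X f) :=
  isCompact_iff_compactSpace.mp (isClosed_invLim hfc).isCompact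

theorem exists_mem_invLim_apply_eq [∀ n, CompactSpace (X n)] (hfc : ∀ n, Continuous (f n))
    (hfs : ∀ n, Surjective (f n)) {m : ℕ} (x : X m) : ∃ z ∈ invLim X f, z m = x := by
  have : ∀ n, Nonempty (X n) := fun n =>
    ⟨bondMap f (Nat.le_add_right n m) (bondMap_surjective f hfs (Nat.le_add_left m n) x).choose⟩
  let C (i : ℕ) : Set (∀ n, X n) :=
    {w | w m = x} ∩ ⋂ j ∈ Iio i, {w | w j = f j (w (j + 1))}
  have hC_closed (i : ℕ) : IsClosed (C i) :=
    (isClosed_eq (continuous_apply m) continuous_const).inter <| isClosed_biInter fun j _ =>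
      isClosed_eq (continuous_apply j) ((hfc j).comp (continuous_apply _))
  have hC_anti (i : ℕ) : C (i + 1) ⊆ C i :=
    inter_subset_inter_right _ (biInter_subset_biInter_left (Iio_subset_Iio i.le_succ))
  -- a partial thread through `x`, defined up to level `m + i` by a preimage of `x` there
  have hC_nonempty (i : ℕ) : (C i).Nonempty := by
    obtain ⟨y, hy⟩ := bondMap_surjective f hfs (Nat.le_add_right m i) x
    refine ⟨fun n => if h : n ≤ m + i then bondMap f h y else Classical.arbitrary _, ?_, ?_⟩
    · simpa only [Nat.le_add_right, dite_true, mem_ofPred_eq] using hy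
    · simp only [mem_iInter, mem_Iio, mem_ofPred_eq]
      intro j hj
      rw [dif_pos (by omega), dif_pos (by omega), bondMap_of_succ_le f _ (by omega), comp_apply]
  obtain ⟨w, hw⟩ := IsCompact.nonempty_iInter_of_sequence_nonempty_isCompact_isClosed C hC_anti
    hC_nonempty (hC_closed 0).isCompact hC_closed
  simp only [C, mem_iInter, mem_inter_iff, mem_ofPred_eq, mem_Iio] at hw
  exact ⟨w, fun n => (hw (n + 1)).2 n n.lt_succ_self, (hw 0).1⟩

end InvLim

section Ttrans

variable {X Y : ℕ → Type*} {f : ∀ n, X (n + 1) → X n} {gs : ∀ n, Y (n + 1) → Y n}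

theorem image_bondMap_Ttrans (g : ↥(invLim X f) → ↥(invLim Y gs)) {j k : ℕ} (h : j ≤ k)
    (m : ℕ) (x : X m) : bondMap gs h '' Ttrans g k m x = Ttrans g j m x := by
  ext y
  constructor
  · rintro ⟨_, ⟨w, hw, rfl⟩, rfl⟩
    exact ⟨w, hw, (bondMap_apply_of_mem_invLim (g w).2 h).symm⟩
  · rintro ⟨w, hw, rfl⟩
    exact ⟨_, ⟨w, hw, rfl⟩, bondMap_apply_of_mem_invLim (g w).2 h⟩

theorem image_Ttrans_succ_subset (g : ↥(invLim X f) → ↥(invLim Y gs)) (n m : ℕ)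
    (x : X (m + 1)) : gs n '' Ttrans g (n + 1) (m + 1) x ⊆ Ttrans g n m (f m x) := by
  rintro _ ⟨_, ⟨w, hw, rfl⟩, rfl⟩
  exact ⟨w, by rw [w.2 m, hw], (g w).2 n⟩

theorem isUSC_Ttrans [∀ n, TopologicalSpace (X n)] [∀ n, CompactSpace (X n)]
    [∀ n, T2Space (X n)] [∀ n, TopologicalSpace (Y n)] [∀ n, T2Space (Y n)]
    (hfc : ∀ n, Continuous (f n)) (hfs : ∀ n, Surjective (f n))
    {g : ↥(invLim X f) → ↥(invLim Y gs)} (hg : Continuous g) (n m : ℕ) : IsUSC (Ttrans g n m) := by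
  have := compactSpace_invLim hfc
  have hgraph : IsClosed {p : X m × Y n | p.2 ∈ Ttrans g n m p.1} := by
    have : {p : X m × Y n | p.2 ∈ Ttrans g n m p.1} = range fun z => (z.1 m, (g z).1 n) := by
      ext ⟨a, b⟩
      simp only [Ttrans, mem_ofPred_eq, mem_range, Prod.mk.injEq]
    rw [this]
    exact (isCompact_range (((continuous_apply m).comp continuous_subtype_val).prodMk
      ((continuous_apply n).comp (continuous_subtype_val.comp hg)))).isClosed
  refine ⟨fun x => ?_, fun x => hgraph.preimage (Continuous.prodMk_right x), hgraph⟩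
  obtain ⟨z, hz, rfl⟩ := exists_mem_invLim_apply_eq hfc hfs x
  exact ⟨_, ⟨z, hz⟩, rfl, rfl⟩

theorem tendsto_diam_Ttrans [∀ n, TopologicalSpace (X n)] [∀ n, CompactSpace (X n)]
    [∀ n, T2Space (X n)] [∀ n, MetricSpace (Y n)] (hfc : ∀ n, Continuous (f n))
    {g : ↥(invLim X f) → ↥(invLim Y gs)} (hg : Continuous g) (n : ℕ) (z : ↥(invLim X f)) :
    Tendsto (fun m => diam (Ttrans g n m (z.1 m))) atTop (𝓝 0) := by
  have := compactSpace_invLim hfc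
  have hS_anti : Antitone fun m => {w : ↥(invLim X f) | w.1 m = z.1 m} :=
    antitone_nat_of_succ_le fun m w hw => apply_eq_of_mem_invLim w.2 z.2 m.le_succ hw
  have hS_closed (m : ℕ) : IsClosed {w : ↥(invLim X f) | w.1 m = z.1 m} :=
    isClosed_eq ((continuous_apply m).comp continuous_subtype_val) continuous_const
  have hSz : ⋂ m, {w : ↥(invLim X f) | w.1 m = z.1 m} ⊆ {z} := fun w hw =>
    Subtype.ext (funext (mem_iInter.mp hw))
  exact tendsto_diam_image_of_antitone hS_anti hS_closed hSz
    ((continuous_apply n).comp (continuous_subtype_val.comp hg))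

theorem tendsto_diam_bondMap_image_Ttrans [∀ n, MetricSpace (X n)] [∀ n, CompactSpace (X n)]
    (hfc : ∀ n, Continuous (f n)) {g : ↥(invLim X f) → ↥(invLim X f)} (hg : Continuous g)
    (j : ℕ) (z : ↥(invLim X f)) :
    Tendsto (fun k => diam (if hj : j ≤ k then bondMap f hj '' Ttrans g k (k + 1) (z.1 (k + 1))
      else (∅ : Set (X j)))) atTop (𝓝 0) := by
  refine ((tendsto_diam_Ttrans hfc hg j z).comp (tendsto_add_atTop_nat 1)).congr' ?_
  filter_upwards [eventually_ge_atTop j] with k hk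
  rw [dif_pos hk, image_bondMap_Ttrans, comp_apply]

theorem exists_apply_ne_of_forall_ne [∀ n, TopologicalSpace (X n)] [∀ n, CompactSpace (X n)]
    [∀ n, T2Space (X n)] (hfc : ∀ n, Continuous (f n)) {g : ↥(invLim X f) → ↥(invLim X f)}
    (hg : Continuous g) (h : ∀ w, g w ≠ w) : ∃ k, ∀ w, (g w).1 k ≠ w.1 k := by
  have := compactSpace_invLim hfc
  by_contra! hC
  let C (k : ℕ) : Set ↥(invLim X f) := {w | (g w).1 k = w.1 k}
  have hC_closed (k : ℕ) : IsClosed (C k) :=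
    isClosed_eq ((continuous_apply k).comp (continuous_subtype_val.comp hg))
      ((continuous_apply k).comp continuous_subtype_val)
  obtain ⟨w, hw⟩ := IsCompact.nonempty_iInter_of_sequence_nonempty_isCompact_isClosed C
    (fun k w hw => apply_eq_of_mem_invLim (g w).2 w.2 k.le_succ hw) hC (hC_closed 0).isCompact
    hC_closed
  exact h w (Subtype.ext (funext (mem_iInter.mp hw)))

theorem apply_notMem_Ttrans_succ {g : ↥(invLim X f) → ↥(invLim X f)} {k : ℕ}
    (hk : ∀ w, (g w).1 k ≠ w.1 k) (x : X (k + 1)) : f k x ∉ Ttrans g k (k + 1) x := by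
  rintro ⟨w, rfl, hw⟩
  exact hk w (hw.trans (w.2 k).symm)

end Ttrans

-- `univ` for `k < j` makes the family antitone in `k` from the start.
def bondImage {X : ℕ → Type*} (f : ∀ n, X (n + 1) → X n) (H : ∀ k, X (k + 1) → Set (X k))
    (j k : ℕ) (z : ∀ n, X n) : Set (X j) :=
  if h : j ≤ k then bondMap f h '' H k (z (k + 1)) else univ

section BondImage

variable {X : ℕ → Type*} {f : ∀ n, X (n + 1) → X n} {H : ∀ k, X (k + 1) → Set (X k)}

theorem bondImage_of_le {j k : ℕ} (h : j ≤ k) (z : ∀ n, X n) :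
    bondImage f H j k z = bondMap f h '' H k (z (k + 1)) :=
  dif_pos h

theorem antitone_bondImage
    (hH_compat : ∀ k (x : X (k + 2)), f k '' H (k + 1) x ⊆ H k (f (k + 1) x))
    (j : ℕ) {z : ∀ n, X n} (hz : z ∈ invLim X f) : Antitone fun k => bondImage f H j k z := by
  refine antitone_nat_of_succ_le fun k => ?_
  by_cases h : j ≤ k
  · rw [bondImage_of_le h, bondImage_of_le (h.trans k.le_succ), bondMap_succ f h, image_comp,
      hz (k + 1)]
    exact image_mono (hH_compat k _)
  · simp only [bondImage, dif_neg h, subset_univ]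

theorem mem_iInter_bondImage_succ
    (hH_compat : ∀ k (x : X (k + 2)), f k '' H (k + 1) x ⊆ H k (f (k + 1) x))
    {j : ℕ} {z : ∀ n, X n} (hz : z ∈ invLim X f) {a : X (j + 1)}
    (ha : a ∈ ⋂ k, bondImage f H (j + 1) k z) : f j a ∈ ⋂ k, bondImage f H j k z := by
  refine mem_iInter.mpr fun k => antitone_bondImage hH_compat j hz (le_max_left k (j + 1)) ?_
  have hak := mem_iInter.mp ha (max k (j + 1))
  rw [bondImage_of_le (le_max_right k (j + 1))] at hak
  obtain ⟨b, hb, rfl⟩ := hak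
  show _ ∈ bondImage f H j (max k (j + 1)) z
  rw [bondImage_of_le (by omega)]
  exact ⟨b, hb, congrFun (bondMap_of_succ_le f _ _) b⟩

section Topology

variable [∀ n, TopologicalSpace (X n)]

theorem bondImage_nonempty (hH : ∀ k, IsUSC (H k)) (j k : ℕ) (z : ∀ n, X n) :
    (bondImage f H j k z).Nonempty := by
  unfold bondImage
  split_ifs
  · exact ((hH k).1 _).image _
  · exact ⟨z j, trivial⟩

theorem isCompact_bondImage [∀ n, CompactSpace (X n)] (hfc : ∀ n, Continuous (f n))
    (hH : ∀ k, IsUSC (H k)) (j k : ℕ) (z : ∀ n, X n) : IsCompact (bondImage f H j k z) := by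
  unfold bondImage
  split_ifs with h
  · exact ((hH k).2.1 _).isCompact.image (continuous_bondMap hfc h)
  · exact isCompact_univ

theorem isClosed_setOf_mem_bondImage [∀ n, CompactSpace (X n)] [∀ n, T2Space (X n)]
    (hfc : ∀ n, Continuous (f n)) (hH : ∀ k, IsUSC (H k))
    (j k : ℕ) : IsClosed {p : (∀ n, X n) × X j | p.2 ∈ bondImage f H j k p.1} := by
  by_cases h : j ≤ k
  · simp only [bondImage_of_le h]
    exact (isClosed_setOf_mem_image (hH k).2.2 (continuous_bondMap hfc h)).preimage
      (((continuous_apply (k + 1)).comp continuous_fst).prodMk continuous_snd)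
  · simp only [bondImage, dif_neg h, mem_univ, ofPred_true, isClosed_univ]

end Topology

variable [∀ n, MetricSpace (X n)] [∀ n, CompactSpace (X n)]

theorem exists_continuous_forall_mem_bondImage (hfc : ∀ n, Continuous (f n))
    (hH : ∀ k, IsUSC (H k))
    (hH_compat : ∀ k (x : X (k + 2)), f k '' H (k + 1) x ⊆ H k (f (k + 1) x))
    (hH_diam : ∀ j (z : ↥(invLim X f)),
      Tendsto (fun k => diam (if hj : j ≤ k then bondMap f hj '' H k (z.1 (k + 1))
        else (∅ : Set (X j)))) atTop (𝓝 0)) :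
    ∃ g : ↥(invLim X f) → ↥(invLim X f), Continuous g ∧
      ∀ z j k, (g z).1 j ∈ bondImage f H j k z.1 := by
  have := compactSpace_invLim hfc
  have hT (j : ℕ) (z : ↥(invLim X f)) : ∃ a, ⋂ k, bondImage f H j k z.1 = {a} := by
    refine exists_iInter_eq_singleton_of_tendsto_diam (antitone_bondImage hH_compat j z.2)
      (bondImage_nonempty hH j · z.1) (isCompact_bondImage hfc hH j · z.1)
      ((hH_diam j z).congr' ?_)
    filter_upwards [eventually_ge_atTop j] with k hk
    rw [dif_pos hk, bondImage_of_le hk]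
  choose y hy using hT
  have hy_mem_invLim (z : ↥(invLim X f)) : (fun j => y j z) ∈ invLim X f := fun j => by
    have := mem_iInter_bondImage_succ hH_compat z.2 ((hy (j + 1) z).symm ▸ mem_singleton _)
    rwa [hy j z, mem_singleton_iff, eq_comm] at this
  let g (z : ↥(invLim X f)) : ↥(invLim X f) := ⟨fun j => y j z, hy_mem_invLim z⟩
  have hg (z w : ↥(invLim X f)) : w = g z ↔ ∀ j k, w.1 j ∈ bondImage f H j k z.1 := by
    rw [Subtype.ext_iff, funext_iff]
    refine forall_congr' fun j => ?_
    show w.1 j = y j z ↔ _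
    rw [← mem_singleton_iff, ← hy, mem_iInter]
  refine ⟨g, continuous_of_isClosed_graph ?_, fun z => (hg z (g z)).mp rfl⟩
  have : {p : ↥(invLim X f) × ↥(invLim X f) | p.2 = g p.1} =
      ⋂ j, ⋂ k, (fun p => (p.1.1, p.2.1 j)) ⁻¹' {q | q.2 ∈ bondImage f H j k q.1} := by
    ext p
    simp only [mem_ofPred_eq, hg, mem_iInter, mem_preimage]
  rw [this]
  exact isClosed_iInter fun j => isClosed_iInter fun k =>
    (isClosed_setOf_mem_bondImage hfc hH j k).preimage
      ((continuous_subtype_val.comp continuous_fst).prodMk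
        ((continuous_apply j).comp (continuous_subtype_val.comp continuous_snd)))

theorem not_hasFPP_of_exists_isUSC (hfc : ∀ n, Continuous (f n)) (hH : ∀ k, IsUSC (H k))
    (hH_compat : ∀ k (x : X (k + 2)), f k '' H (k + 1) x ⊆ H k (f (k + 1) x))
    (hH_diam : ∀ j (z : ↥(invLim X f)),
      Tendsto (fun k => diam (if hj : j ≤ k then bondMap f hj '' H k (z.1 (k + 1))
        else (∅ : Set (X j)))) atTop (𝓝 0))
    {k : ℕ} (hk : ∀ x : X (k + 1), f k x ∉ H k x) : ¬ HasFPP ↥(invLim X f) := by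
  intro hFPP
  obtain ⟨g, hg, hg_mem⟩ := exists_continuous_forall_mem_bondImage hfc hH hH_compat hH_diam
  obtain ⟨p, hp⟩ := hFPP g hg
  have hpk := hg_mem p k k
  rw [hp, bondImage_of_le le_rfl, bondMap_self, image_id, p.2 k] at hpk
  exact hk _ hpk

end BondImage

theorem stmt14
    {X : ℕ → Type*} [∀ n, MetricSpace (X n)] [∀ n, CompactSpace (X n)]
    (f : ∀ n, X (n + 1) → X n)
    (hfc : ∀ n, Continuous (f n)) (hfs : ∀ n, Surjective (f n)) :
    (¬ HasFPP ↥(invLim X f)) ↔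
    (∃ H : ∀ k : ℕ, X (k + 1) → Set (X k),
      (∀ k, IsUSC (H k)) ∧
      (∀ k : ℕ, ∀ x : X (k + 2), f k '' H (k + 1) x ⊆ H k (f (k + 1) x)) ∧
      (∀ j : ℕ, ∀ z : ↥(invLim X f),
        Tendsto (fun k =>
            diam (if hj : j ≤ k then
              bondMap f hj '' H k (z.1 (k + 1))
            else (∅ : Set (X j))))
          atTop (nhds (0 : ℝ))) ∧
      (∃ k : ℕ, ∀ x : X (k + 1), f k x ∉ H k x)) := by
  constructor
  · intro hFPP
    obtain ⟨g, hg, hg_fix⟩ : ∃ g, Continuous g ∧ ∀ p, g p ≠ p := by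
      simpa only [HasFPP, not_forall, not_exists, exists_prop] using hFPP
    obtain ⟨k, hk⟩ := exists_apply_ne_of_forall_ne hfc hg hg_fix
    exact ⟨fun k => Ttrans g k (k + 1), fun k => isUSC_Ttrans hfc hfs hg k (k + 1),
      fun k => image_Ttrans_succ_subset g k (k + 1), tendsto_diam_bondMap_image_Ttrans hfc hg,
      k, apply_notMem_Ttrans_succ hk⟩
  · rintro ⟨H, hH, hH_compat, hH_diam, k, hk⟩
    exact not_hasFPP_of_exists_isUSC hfc hH hH_compat hH_diam hk
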